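/- arXiv:1805.08354 — 3 statements merged into one kernel-verified Lean document; each statement's English description precedes it below -/
import Mathlib

section
/- Fix Θ₁, Θ₂, Θ₃ ∈ [0, π) with Θ₁ + Θ₂ + Θ₃ < π. Then the inner angles ϑ₁, ϑ₂, ϑ₃ are smooth functions of (r₁, r₂, r₃) on the open positive octant, and for all distinct i, j ∈ {1,2,3}: sinh rⱼ · ∂ϑᵢ/∂rⱼ = sinh rᵢ · ∂ϑⱼ/∂rᵢ. -/
/-- The inverse hyperbolic cosine: `arcosh x = log (x + √(x² − 1))` for `x ≥ 1`. -/
noncomputable def arcosh (x : ℝ) : ℝ := Real.log (x + Real.sqrt (x ^ 2 - 1))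

/-- The hyperbolic distance `dₖ` between the centers of two hyperbolic disks of radii
`r (k+1)`, `r (k+2)` meeting at exterior intersection angle `Θ k` (hyperbolic cosine law). -/
noncomputable def dist3 (Θ r : Fin 3 → ℝ) (k : Fin 3) : ℝ :=
  arcosh (Real.cosh (r (k + 1)) * Real.cosh (r (k + 2)) +
    Real.cos (Θ k) * Real.sinh (r (k + 1)) * Real.sinh (r (k + 2)))

/-- The inner angle `ϑᵢ` at the `i`-th vertex of the hyperbolic triangle of centers of a
three-circle configuration, by the hyperbolic law of cosines. -/
noncomputable def theta3 (Θ r : Fin 3 → ℝ) (i : Fin 3) : ℝ :=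
  Real.arccos ((Real.cosh (dist3 Θ r (i + 1)) * Real.cosh (dist3 Θ r (i + 2)) -
      Real.cosh (dist3 Θ r i)) /
    (Real.sinh (dist3 Θ r (i + 1)) * Real.sinh (dist3 Θ r (i + 2))))

open Real hiding arcosh


lemma cosh_arcosh {x : ℝ} (hx : 1 < x) : Real.cosh (arcosh x) = x := by
  have h1 : (0:ℝ) ≤ x ^ 2 - 1 := by nlinarith
  have hs : Real.sqrt (x ^ 2 - 1) ^ 2 = x ^ 2 - 1 := Real.sq_sqrt h1
  have hsn : 0 ≤ Real.sqrt (x ^ 2 - 1) := Real.sqrt_nonneg _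
  have hpos : 0 < x + Real.sqrt (x ^ 2 - 1) := by nlinarith
  have hinv : (x + Real.sqrt (x ^ 2 - 1))⁻¹ = x - Real.sqrt (x ^ 2 - 1) :=
    inv_eq_of_mul_eq_one_right (by nlinarith)
  rw [arcosh, Real.cosh_log hpos, hinv]; ring

lemma sinh_arcosh {x : ℝ} (hx : 1 < x) : Real.sinh (arcosh x) = Real.sqrt (x ^ 2 - 1) := by
  have h1 : (0:ℝ) ≤ x ^ 2 - 1 := by nlinarith
  have hs : Real.sqrt (x ^ 2 - 1) ^ 2 = x ^ 2 - 1 := Real.sq_sqrt h1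
  have hsn : 0 ≤ Real.sqrt (x ^ 2 - 1) := Real.sqrt_nonneg _
  have hpos : 0 < x + Real.sqrt (x ^ 2 - 1) := by nlinarith
  have hinv : (x + Real.sqrt (x ^ 2 - 1))⁻¹ = x - Real.sqrt (x ^ 2 - 1) :=
    inv_eq_of_mul_eq_one_right (by nlinarith)
  rw [arcosh, Real.sinh_log hpos, hinv]; ring

lemma one_lt_arg {a u v : ℝ} (ha : -1 < a) (hu : 0 < u) (hv : 0 < v) :
    1 < Real.cosh u * Real.cosh v + a * Real.sinh u * Real.sinh v := by
  have h1 := Real.cosh_sub u v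
  have h2 := Real.one_le_cosh (u - v)
  have h3 : 0 < Real.sinh u := Real.sinh_pos_iff.2 hu
  have h4 : 0 < Real.sinh v := Real.sinh_pos_iff.2 hv
  nlinarith [mul_pos h3 h4]

lemma neg_one_lt_cos {θ : ℝ} (h : θ ∈ Set.Ico 0 π) : -1 < Real.cos θ := by
  have := Real.cos_lt_cos_of_nonneg_of_le_pi h.1 le_rfl h.2
  rwa [Real.cos_pi] at this

set_option maxHeartbeats 1000000 in
lemma key_alg (X1 X2 X3 Y1 Y2 Y3 A1 A2 A3 B1 B2 B3 : ℝ)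
    (hx1 : X1^2 = Y1^2 + 1) (hx2 : X2^2 = Y2^2 + 1) (hx3 : X3^2 = Y3^2 + 1)
    (hab1 : B1^2 + A1^2 = 1) (hab2 : B2^2 + A2^2 = 1) (hab3 : B3^2 + A3^2 = 1) :
    1 - (X2 * X3 + A1 * Y2 * Y3)^2 - (X3 * X1 + A2 * Y3 * Y1)^2
      - (X1 * X2 + A3 * Y1 * Y2)^2
      + 2 * (X2 * X3 + A1 * Y2 * Y3) * (X3 * X1 + A2 * Y3 * Y1) * (X1 * X2 + A3 * Y1 * Y2)
      = (Y2*Y3*B1 + Y1*Y3*B2 + Y1*Y2*B3)^2 + 2*(Y1*Y2*Y3)^2*(1 + A1*A2*A3)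
        + 2*(Y1*Y1*Y2*Y3)*(X2*X3*(A1 + A2*A3) - B2*B3)
        + 2*(Y1*Y2*Y2*Y3)*(X1*X3*(A2 + A1*A3) - B1*B3)
        + 2*(Y1*Y2*Y3*Y3)*(X1*X2*(A3 + A1*A2) - B1*B2) := by
  linear_combination ((-1)*X3^2 + (2)*X2*X3*Y2*Y3*A1 + (-1)*X2^2 + (2)*X2^2*X3^2) * hx1
    + ((-1) + (-1)*Y1^2 + X3^2 + (2)*X3^2*Y1^2 + (2)*X1*X3*Y1*Y3*A2) * hx2
    + (Y2^2 + Y1^2 + (2)*Y1^2*Y2^2 + (2)*X1*X2*Y1*Y2*A3) * hx3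
    + ((-1)*Y2^2*Y3^2) * hab1 + ((-1)*Y1^2*Y3^2) * hab2 + ((-1)*Y1^2*Y2^2) * hab3

set_option maxHeartbeats 1000000 in
lemma Q_pos {θ1 θ2 θ3 r1 r2 r3 : ℝ} (h1 : θ1 ∈ Set.Ico 0 π) (h2 : θ2 ∈ Set.Ico 0 π)
    (h3 : θ3 ∈ Set.Ico 0 π) (hsum : θ1 + θ2 + θ3 < π)
    (hr1 : 0 < r1) (hr2 : 0 < r2) (hr3 : 0 < r3) :
    0 < 1 - (cosh r2 * cosh r3 + cos θ1 * sinh r2 * sinh r3)^2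
      - (cosh r3 * cosh r1 + cos θ2 * sinh r3 * sinh r1)^2
      - (cosh r1 * cosh r2 + cos θ3 * sinh r1 * sinh r2)^2
      + 2 * (cosh r2 * cosh r3 + cos θ1 * sinh r2 * sinh r3)
          * (cosh r3 * cosh r1 + cos θ2 * sinh r3 * sinh r1)
          * (cosh r1 * cosh r2 + cos θ3 * sinh r1 * sinh r2) := by
  have P1 : sin θ2 * sin θ3 - cos θ2 * cos θ3 < cos θ1 := by
    have hc : cos (π - (θ2 + θ3)) < cos θ1 :=
      cos_lt_cos_of_nonneg_of_le_pi h1.1 (by linarith [h2.1, h3.1]) (by linarith)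
    rw [cos_pi_sub, cos_add] at hc; linarith
  have P2 : sin θ3 * sin θ1 - cos θ3 * cos θ1 < cos θ2 := by
    have hc : cos (π - (θ3 + θ1)) < cos θ2 :=
      cos_lt_cos_of_nonneg_of_le_pi h2.1 (by linarith [h3.1, h1.1]) (by linarith)
    rw [cos_pi_sub, cos_add] at hc; linarith
  have P3 : sin θ1 * sin θ2 - cos θ1 * cos θ2 < cos θ3 := by
    have hc : cos (π - (θ1 + θ2)) < cos θ3 :=
      cos_lt_cos_of_nonneg_of_le_pi h3.1 (by linarith [h1.1, h2.1]) (by linarith)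
    rw [cos_pi_sub, cos_add] at hc; linarith
  set X1 := cosh r1; set X2 := cosh r2; set X3 := cosh r3
  set Y1 := sinh r1; set Y2 := sinh r2; set Y3 := sinh r3
  set A1 := cos θ1; set A2 := cos θ2; set A3 := cos θ3
  set B1 := sin θ1; set B2 := sin θ2; set B3 := sin θ3
  have hy1 : 0 < Y1 := sinh_pos_iff.2 hr1
  have hy2 : 0 < Y2 := sinh_pos_iff.2 hr2
  have hy3 : 0 < Y3 := sinh_pos_iff.2 hr3
  have hX1 : 1 ≤ X1 := one_le_cosh r1
  have hX2 : 1 ≤ X2 := one_le_cosh r2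
  have hX3 : 1 ≤ X3 := one_le_cosh r3
  have hb1 : 0 ≤ B1 := sin_nonneg_of_nonneg_of_le_pi h1.1 h1.2.le
  have hb2 : 0 ≤ B2 := sin_nonneg_of_nonneg_of_le_pi h2.1 h2.2.le
  have hb3 : 0 ≤ B3 := sin_nonneg_of_nonneg_of_le_pi h3.1 h3.2.le
  have hX23 : 1 ≤ X2*X3 := by nlinarith
  have hX13 : 1 ≤ X1*X3 := by nlinarith
  have hX12 : 1 ≤ X1*X2 := by nlinarith
  have hT1 : 0 < X2*X3*(A1 + A2*A3) - B2*B3 := by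
    have hA : 0 < A1 + A2*A3 := by nlinarith [mul_nonneg hb2 hb3]
    nlinarith [mul_le_mul_of_nonneg_right hX23 hA.le]
  have hT2 : 0 < X1*X3*(A2 + A1*A3) - B1*B3 := by
    have hA : 0 < A2 + A1*A3 := by nlinarith [mul_nonneg hb1 hb3]
    nlinarith [mul_le_mul_of_nonneg_right hX13 hA.le]
  have hT3 : 0 < X1*X2*(A3 + A1*A2) - B1*B2 := by
    have hA : 0 < A3 + A1*A2 := by nlinarith [mul_nonneg hb1 hb2]
    nlinarith [mul_le_mul_of_nonneg_right hX12 hA.le]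
  have h1a : 0 ≤ 1 + A1*A2*A3 := by
    have habs : |A1*A2*A3| ≤ 1 := by
      rw [abs_mul, abs_mul]
      exact mul_le_one₀ (mul_le_one₀ (abs_cos_le_one θ1) (abs_nonneg _) (abs_cos_le_one θ2))
        (abs_nonneg _) (abs_cos_le_one θ3)
    linarith [neg_abs_le (A1*A2*A3)]
  have g1 : 0 < 2*(Y1*Y1*Y2*Y3)*(X2*X3*(A1 + A2*A3) - B2*B3) := by
    apply mul_pos _ hT1; positivity
  have g2 : 0 < 2*(Y1*Y2*Y2*Y3)*(X1*X3*(A2 + A1*A3) - B1*B3) := by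
    apply mul_pos _ hT2; positivity
  have g3 : 0 < 2*(Y1*Y2*Y3*Y3)*(X1*X2*(A3 + A1*A2) - B1*B2) := by
    apply mul_pos _ hT3; positivity
  have g4 : 0 ≤ 2*(Y1*Y2*Y3)^2*(1 + A1*A2*A3) := by
    apply mul_nonneg _ h1a; positivity
  rw [key_alg X1 X2 X3 Y1 Y2 Y3 A1 A2 A3 B1 B2 B3 (cosh_sq r1) (cosh_sq r2) (cosh_sq r3)
    (sin_sq_add_cos_sq θ1) (sin_sq_add_cos_sq θ2) (sin_sq_add_cos_sq θ3)]
  have hS := sq_nonneg (Y2*Y3*B1 + Y1*Y3*B2 + Y1*Y2*B3)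
  linarith


set_option maxHeartbeats 1000000 in
lemma hasDerivAt_core {K P W U V t0 : ℝ} (hK : 1 < K)
    (hB : 1 < U * Real.cosh t0 + V * Real.sinh t0)
    (hQ : 0 < 1 - (P * Real.cosh t0 + W * Real.sinh t0)^2
        - (U * Real.cosh t0 + V * Real.sinh t0)^2 - K^2
        + 2 * (P * Real.cosh t0 + W * Real.sinh t0) * (U * Real.cosh t0 + V * Real.sinh t0) * K) :
    HasDerivAt (fun t => Real.arccos ((K * (U * Real.cosh t + V * Real.sinh t)
        - (P * Real.cosh t + W * Real.sinh t)) /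
      (Real.sqrt (K^2 - 1) * Real.sqrt ((U * Real.cosh t + V * Real.sinh t)^2 - 1))))
      (((P * Real.sinh t0 + W * Real.cosh t0) * ((U * Real.cosh t0 + V * Real.sinh t0)^2 - 1)
        + (U * Real.sinh t0 + V * Real.cosh t0)
          * (K - (P * Real.cosh t0 + W * Real.sinh t0) * (U * Real.cosh t0 + V * Real.sinh t0)))
       / (((U * Real.cosh t0 + V * Real.sinh t0)^2 - 1) *
          Real.sqrt (1 - (P * Real.cosh t0 + W * Real.sinh t0)^2
            - (U * Real.cosh t0 + V * Real.sinh t0)^2 - K^2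
            + 2 * (P * Real.cosh t0 + W * Real.sinh t0) * (U * Real.cosh t0 + V * Real.sinh t0) * K)))
      t0 := by
  set A0 := P * Real.cosh t0 + W * Real.sinh t0 with hA0def
  set B0 := U * Real.cosh t0 + V * Real.sinh t0 with hB0def
  set A' := P * Real.sinh t0 + W * Real.cosh t0 with hA'def
  set B' := U * Real.sinh t0 + V * Real.cosh t0 with hB'def
  set Qv := 1 - A0^2 - B0^2 - K^2 + 2*A0*B0*K with hQvdef
  set sK := Real.sqrt (K^2 - 1) with hsKdef
  set sB := Real.sqrt (B0^2 - 1) with hsBdef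
  set sQ := Real.sqrt Qv with hsQdef
  have hKsq : 0 < K^2 - 1 := by nlinarith
  have hBsq : 0 < B0^2 - 1 := by nlinarith
  have hsK : sK^2 = K^2 - 1 := Real.sq_sqrt hKsq.le
  have hsB : sB^2 = B0^2 - 1 := Real.sq_sqrt hBsq.le
  have hsQ : sQ^2 = Qv := Real.sq_sqrt hQ.le
  have hsKpos : 0 < sK := Real.sqrt_pos.2 hKsq
  have hsBpos : 0 < sB := Real.sqrt_pos.2 hBsq
  have hsQpos : 0 < sQ := Real.sqrt_pos.2 hQ
  have hA : HasDerivAt (fun t => P * Real.cosh t + W * Real.sinh t) A' t0 :=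
    ((Real.hasDerivAt_cosh t0).const_mul P).add ((Real.hasDerivAt_sinh t0).const_mul W)
  have hBd : HasDerivAt (fun t => U * Real.cosh t + V * Real.sinh t) B' t0 :=
    ((Real.hasDerivAt_cosh t0).const_mul U).add ((Real.hasDerivAt_sinh t0).const_mul V)
  have hsq : HasDerivAt (fun t => (U * Real.cosh t + V * Real.sinh t)^2 - 1) (2*B0*B') t0 := by
    have := (hBd.pow 2).sub_const 1
    refine this.congr_deriv ?_
    push_cast
    ring
  have hsqrtB : HasDerivAt (fun t => Real.sqrt ((U * Real.cosh t + V * Real.sinh t)^2 - 1))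
      (1/(2*sB) * (2*B0*B')) t0 := by
    exact (Real.hasDerivAt_sqrt hBsq.ne').comp t0 hsq
  have hden : HasDerivAt (fun t => sK * Real.sqrt ((U * Real.cosh t + V * Real.sinh t)^2 - 1))
      (sK * (1/(2*sB) * (2*B0*B'))) t0 := hsqrtB.const_mul sK
  have hnum : HasDerivAt (fun t => K * (U * Real.cosh t + V * Real.sinh t)
      - (P * Real.cosh t + W * Real.sinh t)) (K*B' - A') t0 := (hBd.const_mul K).sub hA
  have hdenne : sK * sB ≠ 0 := (mul_pos hsKpos hsBpos).ne'
  have hu : HasDerivAt (fun t => (K * (U * Real.cosh t + V * Real.sinh t)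
        - (P * Real.cosh t + W * Real.sinh t)) /
      (sK * Real.sqrt ((U * Real.cosh t + V * Real.sinh t)^2 - 1)))
      (((K*B' - A') * (sK * sB) - (K*B0 - A0) * (sK * (1/(2*sB) * (2*B0*B')))) / (sK * sB)^2)
      t0 := hnum.div hden hdenne
  have hQfac : (K*B0 - A0)^2 = (sK*sB)^2 - Qv := by
    rw [mul_pow, hsK, hsB, hQvdef]; ring
  have hu0sq : ((K*B0 - A0) / (sK*sB))^2 < 1 := by
    rw [div_pow, div_lt_one (by positivity)]
    rw [hQfac]
    nlinarith
  have hune1 : (K*B0 - A0) / (sK*sB) ≠ 1 := by intro h; rw [h] at hu0sq; norm_num at hu0sq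
  have hune2 : (K*B0 - A0) / (sK*sB) ≠ -1 := by intro h; rw [h] at hu0sq; norm_num at hu0sq
  have harccos := (Real.hasDerivAt_arccos hune2 hune1).comp t0 hu
  refine harccos.congr_deriv ?_
  symm
  have hval : 1 - ((K*B0 - A0) / (sK*sB))^2 = (sQ / (sK*sB))^2 := by
    rw [div_pow, div_pow, hsQ]
    rw [hQfac]
    field_simp
    ring
  rw [hval, Real.sqrt_sq (by positivity)]
  rw [← hsB]
  field_simp
  linear_combination (B' * K) * hsB

set_option maxHeartbeats 2000000 in
lemma pairSym {a b c p q s : ℝ} (ha : a ∈ Set.Ico 0 π) (hb : b ∈ Set.Ico 0 π)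
    (hc : c ∈ Set.Ico 0 π) (hsum : a + b + c < π) (hp : 0 < p) (hq : 0 < q) (hs : 0 < s) :
    Real.sinh q * deriv (fun t =>
      Real.arccos ((Real.cosh (arcosh (Real.cosh s * Real.cosh p + Real.cos b * Real.sinh s * Real.sinh p)) *
          Real.cosh (arcosh (Real.cosh p * Real.cosh t + Real.cos c * Real.sinh p * Real.sinh t)) -
          Real.cosh (arcosh (Real.cosh t * Real.cosh s + Real.cos a * Real.sinh t * Real.sinh s))) /
        (Real.sinh (arcosh (Real.cosh s * Real.cosh p + Real.cos b * Real.sinh s * Real.sinh p)) *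
          Real.sinh (arcosh (Real.cosh p * Real.cosh t + Real.cos c * Real.sinh p * Real.sinh t))))) q
    = Real.sinh p * deriv (fun t =>
      Real.arccos ((Real.cosh (arcosh (Real.cosh t * Real.cosh q + Real.cos c * Real.sinh t * Real.sinh q)) *
          Real.cosh (arcosh (Real.cosh q * Real.cosh s + Real.cos a * Real.sinh q * Real.sinh s)) -
          Real.cosh (arcosh (Real.cosh s * Real.cosh t + Real.cos b * Real.sinh s * Real.sinh t))) /
        (Real.sinh (arcosh (Real.cosh t * Real.cosh q + Real.cos c * Real.sinh t * Real.sinh q)) *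
          Real.sinh (arcosh (Real.cosh q * Real.cosh s + Real.cos a * Real.sinh q * Real.sinh s))))) p := by
  have hca : -1 < Real.cos a := neg_one_lt_cos ha
  have hcb : -1 < Real.cos b := neg_one_lt_cos hb
  have hcc : -1 < Real.cos c := neg_one_lt_cos hc
  -- LHS canonicalization
  have hKL : 1 < Real.cosh s * Real.cosh p + Real.cos b * Real.sinh s * Real.sinh p :=
    one_lt_arg hcb hs hp
  have hBL : 1 < Real.cosh p * Real.cosh q + Real.cos c * Real.sinh p * Real.sinh q :=
    one_lt_arg hcc hp hq
  have hevL : (fun t =>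
      Real.arccos ((Real.cosh (arcosh (Real.cosh s * Real.cosh p + Real.cos b * Real.sinh s * Real.sinh p)) *
          Real.cosh (arcosh (Real.cosh p * Real.cosh t + Real.cos c * Real.sinh p * Real.sinh t)) -
          Real.cosh (arcosh (Real.cosh t * Real.cosh s + Real.cos a * Real.sinh t * Real.sinh s))) /
        (Real.sinh (arcosh (Real.cosh s * Real.cosh p + Real.cos b * Real.sinh s * Real.sinh p)) *
          Real.sinh (arcosh (Real.cosh p * Real.cosh t + Real.cos c * Real.sinh p * Real.sinh t)))))
      =ᶠ[nhds q] (fun t =>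
      Real.arccos (((Real.cosh s * Real.cosh p + Real.cos b * Real.sinh s * Real.sinh p) *
          (Real.cosh p * Real.cosh t + Real.cos c * Real.sinh p * Real.sinh t) -
          (Real.cosh s * Real.cosh t + Real.cos a * Real.sinh s * Real.sinh t)) /
        (Real.sqrt ((Real.cosh s * Real.cosh p + Real.cos b * Real.sinh s * Real.sinh p)^2 - 1) *
          Real.sqrt ((Real.cosh p * Real.cosh t + Real.cos c * Real.sinh p * Real.sinh t)^2 - 1)))) := by
    filter_upwards [Ioi_mem_nhds hq] with t ht
    have h1t : 1 < Real.cosh t * Real.cosh s + Real.cos a * Real.sinh t * Real.sinh s :=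
      one_lt_arg hca ht hs
    have h3t : 1 < Real.cosh p * Real.cosh t + Real.cos c * Real.sinh p * Real.sinh t :=
      one_lt_arg hcc hp ht
    rw [cosh_arcosh hKL, cosh_arcosh h3t, cosh_arcosh h1t, sinh_arcosh hKL, sinh_arcosh h3t,
      show Real.cosh t * Real.cosh s + Real.cos a * Real.sinh t * Real.sinh s
        = Real.cosh s * Real.cosh t + Real.cos a * Real.sinh s * Real.sinh t from by ring]
  -- RHS canonicalization
  have hKR : 1 < Real.cosh q * Real.cosh s + Real.cos a * Real.sinh q * Real.sinh s :=
    one_lt_arg hca hq hs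
  have hBR : 1 < Real.cosh q * Real.cosh p + Real.cos c * Real.sinh q * Real.sinh p :=
    one_lt_arg hcc hq hp
  have hevR : (fun t =>
      Real.arccos ((Real.cosh (arcosh (Real.cosh t * Real.cosh q + Real.cos c * Real.sinh t * Real.sinh q)) *
          Real.cosh (arcosh (Real.cosh q * Real.cosh s + Real.cos a * Real.sinh q * Real.sinh s)) -
          Real.cosh (arcosh (Real.cosh s * Real.cosh t + Real.cos b * Real.sinh s * Real.sinh t))) /
        (Real.sinh (arcosh (Real.cosh t * Real.cosh q + Real.cos c * Real.sinh t * Real.sinh q)) *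
          Real.sinh (arcosh (Real.cosh q * Real.cosh s + Real.cos a * Real.sinh q * Real.sinh s)))))
      =ᶠ[nhds p] (fun t =>
      Real.arccos (((Real.cosh q * Real.cosh s + Real.cos a * Real.sinh q * Real.sinh s) *
          (Real.cosh q * Real.cosh t + Real.cos c * Real.sinh q * Real.sinh t) -
          (Real.cosh s * Real.cosh t + Real.cos b * Real.sinh s * Real.sinh t)) /
        (Real.sqrt ((Real.cosh q * Real.cosh s + Real.cos a * Real.sinh q * Real.sinh s)^2 - 1) *
          Real.sqrt ((Real.cosh q * Real.cosh t + Real.cos c * Real.sinh q * Real.sinh t)^2 - 1)))) := by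
    filter_upwards [Ioi_mem_nhds hp] with t ht
    have h2t : 1 < Real.cosh t * Real.cosh q + Real.cos c * Real.sinh t * Real.sinh q :=
      one_lt_arg hcc ht hq
    have h1t : 1 < Real.cosh s * Real.cosh t + Real.cos b * Real.sinh s * Real.sinh t :=
      one_lt_arg hcb hs ht
    rw [cosh_arcosh h2t, cosh_arcosh hKR, cosh_arcosh h1t, sinh_arcosh h2t, sinh_arcosh hKR,
      show Real.cosh t * Real.cosh q + Real.cos c * Real.sinh t * Real.sinh q
        = Real.cosh q * Real.cosh t + Real.cos c * Real.sinh q * Real.sinh t from by ring,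
      mul_comm (Real.cosh q * Real.cosh t + Real.cos c * Real.sinh q * Real.sinh t)
        (Real.cosh q * Real.cosh s + Real.cos a * Real.sinh q * Real.sinh s),
      mul_comm (Real.sqrt ((Real.cosh q * Real.cosh t + Real.cos c * Real.sinh q * Real.sinh t)^2 - 1))
        (Real.sqrt ((Real.cosh q * Real.cosh s + Real.cos a * Real.sinh q * Real.sinh s)^2 - 1))]
  -- Q positivity, both shapes
  have hQbase := Q_pos ha hb hc hsum hp hq hs
  have hQL : 0 < 1 - (Real.cosh s * Real.cosh q + Real.cos a * Real.sinh s * Real.sinh q)^2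
      - (Real.cosh p * Real.cosh q + Real.cos c * Real.sinh p * Real.sinh q)^2
      - (Real.cosh s * Real.cosh p + Real.cos b * Real.sinh s * Real.sinh p)^2
      + 2 * (Real.cosh s * Real.cosh q + Real.cos a * Real.sinh s * Real.sinh q)
          * (Real.cosh p * Real.cosh q + Real.cos c * Real.sinh p * Real.sinh q)
          * (Real.cosh s * Real.cosh p + Real.cos b * Real.sinh s * Real.sinh p) := by
    nlinarith [hQbase]
  have hQR : 0 < 1 - (Real.cosh s * Real.cosh p + Real.cos b * Real.sinh s * Real.sinh p)^2
      - (Real.cosh q * Real.cosh p + Real.cos c * Real.sinh q * Real.sinh p)^2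
      - (Real.cosh q * Real.cosh s + Real.cos a * Real.sinh q * Real.sinh s)^2
      + 2 * (Real.cosh s * Real.cosh p + Real.cos b * Real.sinh s * Real.sinh p)
          * (Real.cosh q * Real.cosh p + Real.cos c * Real.sinh q * Real.sinh p)
          * (Real.cosh q * Real.cosh s + Real.cos a * Real.sinh q * Real.sinh s) := by
    nlinarith [hQbase]
  have hdL := (hasDerivAt_core (P := Real.cosh s) (W := Real.cos a * Real.sinh s)
      (U := Real.cosh p) (V := Real.cos c * Real.sinh p) (t0 := q) hKL
      (by nlinarith [hBL]) (by nlinarith [hQL])).deriv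
  have hdR := (hasDerivAt_core (P := Real.cosh s) (W := Real.cos b * Real.sinh s)
      (U := Real.cosh q) (V := Real.cos c * Real.sinh q) (t0 := p) hKR
      (by nlinarith [hBR]) (by nlinarith [hQR])).deriv
  rw [hevL.deriv_eq, hevR.deriv_eq, hdL, hdR]
  rw [show (1 - (Real.cosh s * Real.cosh p + Real.cos b * Real.sinh s * Real.sinh p)^2
      - (Real.cosh q * Real.cosh p + Real.cos c * Real.sinh q * Real.sinh p)^2
      - (Real.cosh q * Real.cosh s + Real.cos a * Real.sinh q * Real.sinh s)^2
      + 2 * (Real.cosh s * Real.cosh p + Real.cos b * Real.sinh s * Real.sinh p)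
          * (Real.cosh q * Real.cosh p + Real.cos c * Real.sinh q * Real.sinh p)
          * (Real.cosh q * Real.cosh s + Real.cos a * Real.sinh q * Real.sinh s))
    = (1 - (Real.cosh s * Real.cosh q + Real.cos a * Real.sinh s * Real.sinh q)^2
      - (Real.cosh p * Real.cosh q + Real.cos c * Real.sinh p * Real.sinh q)^2
      - (Real.cosh s * Real.cosh p + Real.cos b * Real.sinh s * Real.sinh p)^2
      + 2 * (Real.cosh s * Real.cosh q + Real.cos a * Real.sinh s * Real.sinh q)
          * (Real.cosh p * Real.cosh q + Real.cos c * Real.sinh p * Real.sinh q)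
          * (Real.cosh s * Real.cosh p + Real.cos b * Real.sinh s * Real.sinh p)) from by ring,
    show ((Real.cosh q * Real.cosh p + Real.cos c * Real.sinh q * Real.sinh p)^2 - 1)
    = ((Real.cosh p * Real.cosh q + Real.cos c * Real.sinh p * Real.sinh q)^2 - 1) from by ring,
    ← mul_div_assoc, ← mul_div_assoc]
  congr 1
  linear_combination ((Real.cosh s)*(Real.sinh q)^2 + (Real.cosh s)*(Real.sinh p)^2*(Real.sinh q)^2*(Real.cos c)^2 + (-1)*(Real.cosh q)*(Real.sinh q)^3*(Real.sinh s)*(Real.cos a) + (-1)*(Real.cosh q)*(Real.sinh p)^2*(Real.sinh q)*(Real.sinh s)*(Real.cos b)*(Real.cos c) + (Real.cosh q)^3*(Real.sinh q)*(Real.sinh s)*(Real.cos a) + (Real.cosh p)*(Real.cosh q)*(Real.cosh s)*(Real.sinh p)*(Real.sinh q)*(Real.cos c) + (-1)*(Real.cosh p)*(Real.cosh q)^2*(Real.sinh p)*(Real.sinh s)*(Real.cos b)) * (Real.cosh_sq_sub_sinh_sq p) + ((-1)*(Real.cosh s)*(Real.sinh p)^2 + (-1)*(Real.cosh s)*(Real.sinh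 p)^2*(Real.sinh q)^2*(Real.cos c)^2 + (Real.cosh q)*(Real.sinh q)*(Real.sinh s)*(Real.cos a) + (Real.cosh q)*(Real.sinh p)^2*(Real.sinh q)*(Real.sinh s)*(Real.cos a) + (-1)*(Real.cosh p)*(Real.sinh p)*(Real.sinh s)*(Real.cos b) + (Real.cosh p)*(Real.sinh p)*(Real.sinh q)^2*(Real.sinh s)*(Real.cos a)*(Real.cos c) + (-1)*(Real.cosh p)*(Real.cosh q)*(Real.cosh s)*(Real.sinh p)*(Real.sinh q)*(Real.cos c)) * (Real.cosh_sq_sub_sinh_sq q)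

set_option maxHeartbeats 1000000 in
private lemma part1 (Θ : Fin 3 → ℝ) (hΘ : ∀ τ, Θ τ ∈ Set.Ico 0 Real.pi)
    (hsum : Θ 0 + Θ 1 + Θ 2 < Real.pi) :
    ∀ i : Fin 3, ContDiffOn ℝ (⊤ : ℕ∞) (fun r : Fin 3 → ℝ => theta3 Θ r i)
      {r : Fin 3 → ℝ | ∀ τ, 0 < r τ} := by
  have hopen : IsOpen {r : Fin 3 → ℝ | ∀ τ, 0 < r τ} := by
    have he : {r : Fin 3 → ℝ | ∀ τ, 0 < r τ} = ⋂ τ, {r : Fin 3 → ℝ | 0 < r τ} := by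
      ext r; simp [Set.mem_iInter]
    rw [he]
    exact isOpen_iInter_of_finite fun τ => isOpen_lt continuous_const (continuous_apply τ)
  set g : Fin 3 → (Fin 3 → ℝ) → ℝ := fun k r' =>
    Real.cosh (r' (k + 1)) * Real.cosh (r' (k + 2)) +
      Real.cos (Θ k) * Real.sinh (r' (k + 1)) * Real.sinh (r' (k + 2)) with hgdef
  have hgpos : ∀ (k : Fin 3) (r' : Fin 3 → ℝ), (∀ τ, 0 < r' τ) → 1 < g k r' := by
    intro k r' h
    exact one_lt_arg (neg_one_lt_cos (hΘ k)) (h _) (h _)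
  have theta3_eq : ∀ (r' : Fin 3 → ℝ), (∀ τ, 0 < r' τ) → ∀ i,
      theta3 Θ r' i = Real.arccos ((g (i+1) r' * g (i+2) r' - g i r') /
        (Real.sqrt ((g (i+1) r')^2 - 1) * Real.sqrt ((g (i+2) r')^2 - 1))) := by
    intro r' h i
    rw [theta3, dist3, dist3, dist3, cosh_arcosh (hgpos (i+1) r' h),
      cosh_arcosh (hgpos (i+2) r' h), cosh_arcosh (hgpos i r' h),
      sinh_arcosh (hgpos (i+1) r' h), sinh_arcosh (hgpos (i+2) r' h)]
  have hcoord : ∀ m : Fin 3, ContDiff ℝ (⊤ : ℕ∞) (fun r' : Fin 3 → ℝ => r' m) := by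
    intro m; exact contDiff_pi.mp contDiff_id m
  have hg : ∀ k, ContDiff ℝ (⊤ : ℕ∞) (g k) := by
    intro k
    exact ((Real.contDiff_cosh.comp (hcoord _)).mul (Real.contDiff_cosh.comp (hcoord _))).add
      (((contDiff_const.mul (Real.contDiff_sinh.comp (hcoord _)))).mul
        (Real.contDiff_sinh.comp (hcoord _)))
  have e1 : ∀ i : Fin 3, i + 1 + 1 = i + 2 := by decide
  have e2 : ∀ i : Fin 3, i + 1 + 2 = i := by decide
  have e3 : ∀ i : Fin 3, i + 2 + 1 = i := by decide
  have e4 : ∀ i : Fin 3, i + 2 + 2 = i + 1 := by decide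
  have hsum' : ∀ i : Fin 3, Θ i + Θ (i+1) + Θ (i+2) < π := by
    intro i; fin_cases i <;> simp <;> linarith
  intro i r hr
  have hr' : ∀ τ, 0 < r τ := hr
  have h0 : 1 < g i r := hgpos i r hr'
  have h1 : 1 < g (i+1) r := hgpos (i+1) r hr'
  have h2 : 1 < g (i+2) r := hgpos (i+2) r hr'
  have hQ : 0 < 1 - (g i r)^2 - (g (i+1) r)^2 - (g (i+2) r)^2
      + 2 * g i r * g (i+1) r * g (i+2) r := by
    have hQ0 := Q_pos (hΘ i) (hΘ (i+1)) (hΘ (i+2)) (hsum' i) (hr' i) (hr' (i+1)) (hr' (i+2))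
    rw [hgdef]
    simp only [e1, e2, e3, e4]
    nlinarith [hQ0]
  have hd1pos : 0 < Real.sqrt ((g (i+1) r)^2 - 1) := Real.sqrt_pos.2 (by nlinarith)
  have hd2pos : 0 < Real.sqrt ((g (i+2) r)^2 - 1) := Real.sqrt_pos.2 (by nlinarith)
  have hdenpos : 0 < Real.sqrt ((g (i+1) r)^2 - 1) * Real.sqrt ((g (i+2) r)^2 - 1) :=
    mul_pos hd1pos hd2pos
  have hdensq : (Real.sqrt ((g (i+1) r)^2 - 1) * Real.sqrt ((g (i+2) r)^2 - 1))^2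
      = ((g (i+1) r)^2 - 1) * ((g (i+2) r)^2 - 1) := by
    rw [mul_pow, Real.sq_sqrt (by nlinarith), Real.sq_sqrt (by nlinarith)]
  have hnumsq : (g (i+1) r * g (i+2) r - g i r)^2
      < (Real.sqrt ((g (i+1) r)^2 - 1) * Real.sqrt ((g (i+2) r)^2 - 1))^2 := by
    rw [hdensq]; nlinarith
  set F := fun r' : Fin 3 → ℝ => (g (i+1) r' * g (i+2) r' - g i r') /
      (Real.sqrt ((g (i+1) r')^2 - 1) * Real.sqrt ((g (i+2) r')^2 - 1)) with hFdef
  have hne1 : F r ≠ 1 := by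
    intro h
    rw [hFdef] at h
    simp only at h
    rw [div_eq_one_iff_eq hdenpos.ne'] at h
    nlinarith [hnumsq]
  have hne2 : F r ≠ -1 := by
    intro h
    rw [hFdef] at h
    simp only at h
    rw [div_eq_iff hdenpos.ne'] at h
    nlinarith [hnumsq]
  have hFc : ContDiffAt ℝ (⊤ : ℕ∞) F r := by
    apply ContDiffAt.div
    · exact (((hg (i+1)).mul (hg (i+2))).sub (hg i)).contDiffAt
    · apply ContDiffAt.mul
      · exact ContDiffAt.sqrt (((hg (i+1)).pow 2).sub contDiff_const).contDiffAt (by nlinarith)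
      · exact ContDiffAt.sqrt (((hg (i+2)).pow 2).sub contDiff_const).contDiffAt (by nlinarith)
    · exact hdenpos.ne'
  have harccos : ContDiffAt ℝ (⊤ : ℕ∞) (fun r' => Real.arccos (F r')) r :=
    (Real.contDiffAt_arccos hne2 hne1).comp r hFc
  apply ContDiffAt.contDiffWithinAt
  apply harccos.congr_of_eventuallyEq
  filter_upwards [hopen.mem_nhds hr] with r' hr''
  exact theta3_eq r' hr'' i

private lemma part2 (Θ : Fin 3 → ℝ) (hΘ : ∀ τ, Θ τ ∈ Set.Ico 0 Real.pi)
    (hsum : Θ 0 + Θ 1 + Θ 2 < Real.pi) :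
    ∀ r : Fin 3 → ℝ, (∀ τ, 0 < r τ) → ∀ i j : Fin 3, i ≠ j →
      Real.sinh (r j) * deriv (fun t => theta3 Θ (Function.update r j t) i) (r j) =
        Real.sinh (r i) * deriv (fun t => theta3 Θ (Function.update r i t) j) (r i) := by
  intro r hr i j hij
  have hs120 : Θ 1 + Θ 2 + Θ 0 < π := by linarith
  have hs201 : Θ 2 + Θ 0 + Θ 1 < π := by linarith
  fin_cases i <;> fin_cases j <;>
    simp only [theta3, dist3, Function.update_apply, Fin.isValue, Fin.reduceAdd, Fin.reduceEq,
      if_true, if_false, ite_true, ite_false, ne_eq, not_true_eq_false] at hij ⊢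
  · exact pairSym (hΘ 0) (hΘ 1) (hΘ 2) hsum (hr 0) (hr 1) (hr 2)
  · exact pairSym (hΘ 2) (hΘ 0) (hΘ 1) hs201 (hr 2) (hr 0) (hr 1) |>.symm
  · exact pairSym (hΘ 0) (hΘ 1) (hΘ 2) hsum (hr 0) (hr 1) (hr 2) |>.symm
  · exact pairSym (hΘ 1) (hΘ 2) (hΘ 0) hs120 (hr 1) (hr 2) (hr 0)
  · exact pairSym (hΘ 2) (hΘ 0) (hΘ 1) hs201 (hr 2) (hr 0) (hr 1)
  · exact pairSym (hΘ 1) (hΘ 2) (hΘ 0) hs120 (hr 1) (hr 2) (hr 0) |>.symm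


theorem three_circle_smooth_and_symmetric
    (Θ : Fin 3 → ℝ)
    (hΘ : ∀ τ, Θ τ ∈ Set.Ico 0 Real.pi)
    (hsum : Θ 0 + Θ 1 + Θ 2 < Real.pi) :
    (∀ i : Fin 3, ContDiffOn ℝ (⊤ : ℕ∞) (fun r : Fin 3 → ℝ => theta3 Θ r i)
      {r : Fin 3 → ℝ | ∀ τ, 0 < r τ}) ∧
    (∀ r : Fin 3 → ℝ, (∀ τ, 0 < r τ) → ∀ i j : Fin 3, i ≠ j →
      Real.sinh (r j) * deriv (fun t => theta3 Θ (Function.update r j t) i) (r j) =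
        Real.sinh (r i) * deriv (fun t => theta3 Θ (Function.update r i t) j) (r i)) :=
  ⟨part1 Θ hΘ hsum, part2 Θ hΘ hsum⟩
end

section
/- Fix Θ ∈ (0, π). Let (r₁, r₂) and (r̃₁, r̃₂) be pairs of positive numbers with tanh(r₂/2)/tanh(r̃₂/2) ≤ tanh(r₁/2)/tanh(r̃₁/2) and tanh(r₁/2)/tanh(r̃₁/2) > 1. Then ϑ₁(r₁, r₂) < ϑ₁(r̃₁, r̃₂). -/
/-- The hyperbolic distance between the centers of two hyperbolic disks of radii `r₁`, `r₂`
meeting at exterior intersection angle `Θ` (hyperbolic cosine law). -/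
noncomputable def dist2 (Θ r₁ r₂ : ℝ) : ℝ :=
  arcosh (Real.cosh r₁ * Real.cosh r₂ + Real.cos Θ * Real.sinh r₁ * Real.sinh r₂)

/-- The inner angle `ϑ₁` at the first center of the hyperbolic triangle with side
lengths `r₁`, `r₂`, `d` (hyperbolic law of cosines). -/
noncomputable def theta2₁ (Θ r₁ r₂ : ℝ) : ℝ :=
  Real.arccos ((Real.cosh r₁ * Real.cosh (dist2 Θ r₁ r₂) - Real.cosh r₂) /
    (Real.sinh r₁ * Real.sinh (dist2 Θ r₁ r₂)))

/-- The inner angle `ϑ₂` at the second center of the hyperbolic triangle with side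
lengths `r₁`, `r₂`, `d` (hyperbolic law of cosines). -/
noncomputable def theta2₂ (Θ r₁ r₂ : ℝ) : ℝ :=
  Real.arccos ((Real.cosh r₂ * Real.cosh (dist2 Θ r₁ r₂) - Real.cosh r₁) /
    (Real.sinh r₂ * Real.sinh (dist2 Θ r₁ r₂)))

open Real

/-! By the hyperbolic law of cosines, `sin Θ · cot ϑ₁ = sinh r₁ coth r₂ + cos Θ cosh r₁`, so
`ϑ₁ = π/2 - arctan (that / sin Θ)` and it suffices to compare these quantities. In the variables
`x = tanh (r₁/2)`, `y = tanh (r₂/2)` the quantity is the rational function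
`(x (y⁻¹ + y) + cos Θ (1 + x²)) / (1 - x²)`, which decreases in `y ∈ (0, 1]` and strictly increases
under the scaling `(x, y) ↦ (λx, λy)`, `λ > 1`. With `λ = x / x̃ > 1` the hypothesis reads
`y ≤ min (λỹ) 1`, so `(x̃, ỹ) → (x̃, min ỹ λ⁻¹) → (x, min (λỹ) 1) → (x, y)` increases the quantity,
strictly at the scaling step. -/

lemma arcosh_eq_real_arcosh (x : ℝ) : _root_.arcosh x = Real.arcosh x := rfl

lemma tanh_pos_of_pos {x : ℝ} (hx : 0 < x) : 0 < tanh x := by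
  rw [tanh_eq_sinh_div_cosh]
  exact div_pos (sinh_pos_iff.2 hx) (cosh_pos x)

lemma cosh_eq_tanh_half (r : ℝ) : cosh r = (1 + tanh (r / 2) ^ 2) / (1 - tanh (r / 2) ^ 2) := by
  obtain ⟨h, rfl⟩ : ∃ h, r = 2 * h := ⟨r / 2, by ring⟩
  have hc := cosh_pos h
  rw [mul_div_cancel_left₀ h two_ne_zero, cosh_two_mul, tanh_eq_sinh_div_cosh]
  field_simp
  exact cosh_sq_sub_sinh_sq h

lemma sinh_eq_tanh_half (r : ℝ) : sinh r = 2 * tanh (r / 2) / (1 - tanh (r / 2) ^ 2) := by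
  obtain ⟨h, rfl⟩ : ∃ h, r = 2 * h := ⟨r / 2, by ring⟩
  have hc := cosh_pos h
  rw [mul_div_cancel_left₀ h two_ne_zero, sinh_two_mul, tanh_eq_sinh_div_cosh]
  field_simp
  rw [cosh_sq_sub_sinh_sq, mul_one]

lemma inv_add_self_le_inv_add_self {y y' : ℝ} (hy : 0 < y) (hyy' : y ≤ y') (hy' : y' ≤ 1) :
    y'⁻¹ + y' ≤ y⁻¹ + y := by
  have hy'0 : 0 < y' := hy.trans_le hyy'
  have key : y⁻¹ + y - (y'⁻¹ + y') = (y' - y) * (1 - y * y') / (y * y') := by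
    field_simp; ring
  have : 0 ≤ (y' - y) * (1 - y * y') / (y * y') :=
    div_nonneg (mul_nonneg (by linarith) (by nlinarith)) (by positivity)
  linarith

lemma arccos_div_sqrt_sq_add_sq {s : ℝ} (hs : 0 < s) (x : ℝ) :
    arccos (x / √(s ^ 2 + x ^ 2)) = π / 2 - arctan (x / s) := by
  have hsin : x / √(s ^ 2 + x ^ 2) = sin (arctan (x / s)) := by
    have : s ^ 2 + x ^ 2 = s ^ 2 * (1 + (x / s) ^ 2) := by field_simp
    rw [sin_arctan, this, sqrt_mul (by positivity), sqrt_sq hs.le]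
    field_simp
  rw [hsin, arccos_eq_pi_div_two_sub_arcsin,
    arcsin_sin (neg_pi_div_two_lt_arctan _).le (arctan_lt_pi_div_two _).le]

/-- In the variables `x = tanh (r₁ / 2)`, `y = tanh (r₂ / 2)` and `c = cos Θ`, this is
`sin Θ · cot ϑ₁`. -/
noncomputable def cotNumerator (c x y : ℝ) : ℝ :=
  (x * (y⁻¹ + y) + c * (1 + x ^ 2)) / (1 - x ^ 2)

lemma cotNumerator_anti_right {c x y y' : ℝ} (hx : 0 ≤ x) (hx1 : x < 1) (hy : 0 < y)
    (hyy' : y ≤ y') (hy' : y' ≤ 1) : cotNumerator c x y' ≤ cotNumerator c x y := by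
  have : 0 < 1 - x ^ 2 := by nlinarith
  unfold cotNumerator
  gcongr (x * ?_ + _) / _
  exact inv_add_self_le_inv_add_self hy hyy' hy'

lemma cotNumerator_lt_scale {c a b l : ℝ} (hc : -1 < c) (ha : 0 < a) (hb : 0 < b) (hl : 1 < l)
    (hla : l * a < 1) : cotNumerator c a b < cotNumerator c (l * a) (l * b) := by
  have hden : 0 < 1 - a ^ 2 := by nlinarith
  have hden' : 0 < 1 - l ^ 2 * a ^ 2 := by
    nlinarith [mul_pos (mul_pos (zero_lt_one.trans hl) ha) (sub_pos.2 hla)]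
  have key : cotNumerator c (l * a) (l * b) - cotNumerator c a b =
      (l ^ 2 - 1) * a * (a ^ 2 + b ^ 2 + 2 * a * b * c) /
        (b * (1 - a ^ 2) * (1 - l ^ 2 * a ^ 2)) := by
    unfold cotNumerator
    rw [mul_pow]
    field_simp
    ring
  have hquad : 0 < a ^ 2 + b ^ 2 + 2 * a * b * c := by nlinarith [sq_nonneg (a - b), mul_pos ha hb]
  have : 0 < (l ^ 2 - 1) * a * (a ^ 2 + b ^ 2 + 2 * a * b * c) /
      (b * (1 - a ^ 2) * (1 - l ^ 2 * a ^ 2)) := by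
    apply div_pos (mul_pos (mul_pos (by nlinarith) ha) hquad) (by positivity)
  linarith

lemma cotNumerator_lt {c a b x y : ℝ} (hc : -1 < c) (ha : 0 < a) (hb : 0 < b) (hb1 : b ≤ 1)
    (hax : a < x) (hx1 : x < 1) (hy : 0 < y) (hy1 : y ≤ 1) (hxy : a * y ≤ b * x) :
    cotNumerator c a b < cotNumerator c x y := by
  have hx : 0 < x := ha.trans hax
  set l := x / a
  have hl : 1 < l := (one_lt_div ha).2 hax
  have hla : l * a = x := div_mul_cancel₀ x ha.ne'
  set b₀ := min b (a / x)
  have hb₀ : 0 < b₀ := lt_min hb (by positivity)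
  have hlb₀ : l * b₀ = min (l * b) 1 := by
    rw [mul_min_of_nonneg _ _ (by positivity), div_mul_div_cancel₀ ha.ne', div_self (by positivity)]
  calc cotNumerator c a b ≤ cotNumerator c a b₀ :=
        cotNumerator_anti_right ha.le (hax.trans hx1) hb₀ (min_le_left _ _) hb1
    _ < cotNumerator c (l * a) (l * b₀) := cotNumerator_lt_scale hc ha hb₀ hl (hla ▸ hx1)
    _ ≤ cotNumerator c x y := by
        rw [hla]
        refine cotNumerator_anti_right hx.le hx1 hy ?_ (hlb₀ ▸ min_le_right _ _)
        rw [hlb₀]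
        refine le_min ?_ hy1
        rw [div_mul_eq_mul_div, le_div_iff₀ ha]
        linarith

lemma one_le_cosh_mul_cosh_add_cos_mul {r₁ r₂ : ℝ} (hr₁ : 0 ≤ r₁) (hr₂ : 0 ≤ r₂) (Θ : ℝ) :
    1 ≤ cosh r₁ * cosh r₂ + cos Θ * sinh r₁ * sinh r₂ := by
  have hsinh : 0 ≤ sinh r₁ * sinh r₂ := mul_nonneg (sinh_nonneg_iff.2 hr₁) (sinh_nonneg_iff.2 hr₂)
  nlinarith [cosh_sub r₁ r₂, one_le_cosh (r₁ - r₂), neg_one_le_cos Θ]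

lemma sinh_mul_coth_add_mul_cosh_eq_cotNumerator (r₁ : ℝ) {r₂ : ℝ} (hr₂ : 0 < r₂) (c : ℝ) :
    sinh r₁ * cosh r₂ / sinh r₂ + c * cosh r₁ = cotNumerator c (tanh (r₁ / 2)) (tanh (r₂ / 2)) := by
  have ht₁ : tanh (r₁ / 2) ^ 2 < 1 := tanh_sq_lt_one _
  have ht₂ : tanh (r₂ / 2) ^ 2 < 1 := tanh_sq_lt_one _
  have ht₂0 := tanh_pos_of_pos (half_pos hr₂)
  rw [cosh_eq_tanh_half r₁, cosh_eq_tanh_half r₂, sinh_eq_tanh_half r₁, sinh_eq_tanh_half r₂,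
    cotNumerator]
  field_simp [(sub_pos.2 ht₁).ne', (sub_pos.2 ht₂).ne']

lemma theta2₁_arccos_arg_eq {Θ r₁ r₂ : ℝ} (hr₁ : 0 < r₁) (hr₂ : 0 < r₂) (hsin : sin Θ ≠ 0) :
    (cosh r₁ * cosh (dist2 Θ r₁ r₂) - cosh r₂) / (sinh r₁ * sinh (dist2 Θ r₁ r₂)) =
      (sinh r₁ * cosh r₂ / sinh r₂ + cos Θ * cosh r₁) /
        √(sin Θ ^ 2 + (sinh r₁ * cosh r₂ / sinh r₂ + cos Θ * cosh r₁) ^ 2) := by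
  have hs₁ : 0 < sinh r₁ := sinh_pos_iff.2 hr₁
  have hs₂ : 0 < sinh r₂ := sinh_pos_iff.2 hr₂
  set g := sinh r₁ * cosh r₂ / sinh r₂ + cos Θ * cosh r₁
  set X := cosh r₁ * cosh r₂ + cos Θ * sinh r₁ * sinh r₂
  have hX := one_le_cosh_mul_cosh_add_cos_mul hr₁.le hr₂.le Θ
  have hg : sinh r₂ * g = sinh r₁ * cosh r₂ + cos Θ * cosh r₁ * sinh r₂ := by
    simp only [g]; field_simp
  have hsq : X ^ 2 - 1 = sinh r₂ ^ 2 * (sin Θ ^ 2 + g ^ 2) := by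
    rw [mul_add, ← mul_pow (sinh r₂) g, hg, sin_sq]
    linear_combination (cosh r₂ ^ 2 - cos Θ ^ 2 * sinh r₂ ^ 2) * cosh_sq_sub_sinh_sq r₁ +
      cosh_sq_sub_sinh_sq r₂
  have hpos : 0 < sin Θ ^ 2 + g ^ 2 := by positivity
  have hsinh : sinh (dist2 Θ r₁ r₂) = sinh r₂ * √(sin Θ ^ 2 + g ^ 2) := by
    rw [dist2, arcosh_eq_real_arcosh, sinh_arcosh hX, hsq, sqrt_mul (by positivity),
      sqrt_sq hs₂.le]
  have hcosh : cosh r₁ * cosh (dist2 Θ r₁ r₂) - cosh r₂ = sinh r₁ * (sinh r₂ * g) := by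
    rw [dist2, arcosh_eq_real_arcosh, cosh_arcosh hX, hg]
    linear_combination cosh r₂ * cosh_sq_sub_sinh_sq r₁
  rw [hsinh, hcosh]
  field_simp

lemma theta2₁_eq_pi_div_two_sub_arctan {Θ r₁ r₂ : ℝ} (hr₁ : 0 < r₁) (hr₂ : 0 < r₂)
    (hsin : 0 < sin Θ) : theta2₁ Θ r₁ r₂ =
      π / 2 - arctan (cotNumerator (cos Θ) (tanh (r₁ / 2)) (tanh (r₂ / 2)) / sin Θ) := by
  rw [theta2₁, theta2₁_arccos_arg_eq hr₁ hr₂ hsin.ne', arccos_div_sqrt_sq_add_sq hsin,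
    sinh_mul_coth_add_mul_cosh_eq_cotNumerator r₁ hr₂]

theorem two_circle_maximum_principle
    (Θ : ℝ) (hΘ : Θ ∈ Set.Ioo 0 Real.pi)
    (r₁ r₂ r₁' r₂' : ℝ) (hr₁ : 0 < r₁) (hr₂ : 0 < r₂) (hr₁' : 0 < r₁') (hr₂' : 0 < r₂')
    (hmax : Real.tanh (r₂ / 2) / Real.tanh (r₂' / 2) ≤ Real.tanh (r₁ / 2) / Real.tanh (r₁' / 2))
    (hgt : 1 < Real.tanh (r₁ / 2) / Real.tanh (r₁' / 2)) :
    theta2₁ Θ r₁ r₂ < theta2₁ Θ r₁' r₂' := by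
  have hsin : 0 < sin Θ := sin_pos_of_pos_of_lt_pi hΘ.1 hΘ.2
  have hcos : -1 < cos Θ := by
    simpa using cos_lt_cos_of_nonneg_of_le_pi hΘ.1.le le_rfl hΘ.2
  have ht₁' := tanh_pos_of_pos (half_pos hr₁')
  have ht₂' := tanh_pos_of_pos (half_pos hr₂')
  rw [theta2₁_eq_pi_div_two_sub_arctan hr₁ hr₂ hsin,
    theta2₁_eq_pi_div_two_sub_arctan hr₁' hr₂' hsin, sub_lt_sub_iff_left]
  refine arctan_strictMono (div_lt_div_of_pos_right ?_ hsin)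
  refine cotNumerator_lt hcos ht₁' ht₂' (tanh_lt_one _).le ?_ (tanh_lt_one _)
    (tanh_pos_of_pos (half_pos hr₂)) (tanh_lt_one _).le ?_
  · rwa [one_lt_div ht₁'] at hgt
  · rw [div_le_div_iff₀ ht₂' ht₁'] at hmax
    linarith
end

section
/- Fix Θ ∈ (0, π). Then ϑ₁(r₁, r₂) + ϑ₂(r₁, r₂) → Θ as (r₁, r₂) → (0, 0) with both coordinates staying positive. -/
open Real

-- `cosh d` for the center distance `d = dist2 Θ r₁ r₂`.
noncomputable def coshDist (Θ r₁ r₂ : ℝ) : ℝ :=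
  cosh r₁ * cosh r₂ + cos Θ * sinh r₁ * sinh r₂

lemma add_le_pi_of_cos_add_cos_nonneg {α β : ℝ} (hα₀ : 0 ≤ α) (hα : α ≤ π) (hβ₀ : 0 ≤ β)
    (hβ : β ≤ π) (h : 0 ≤ cos α + cos β) : α + β ≤ π := by
  have := arccos_le_arccos (show -cos α ≤ cos β by linarith)
  rw [arccos_neg, arccos_cos hα₀ hα, arccos_cos hβ₀ hβ] at this
  linarith

lemma neg_one_lt_cos_of_mem_Ioo {Θ : ℝ} (hΘ : Θ ∈ Set.Ioo 0 π) : -1 < cos Θ := by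
  simpa using cos_lt_cos_of_nonneg_of_le_pi hΘ.1.le le_rfl hΘ.2

section Identities

/- Cleared-denominator forms of the law of sines and of the formulas for `cos ϑ₁ + cos ϑ₂` and
`cos (ϑ₁ + ϑ₂)`: polynomial consequences of `cosh² = sinh² + 1` and `sin² + cos² = 1`. -/

variable (Θ r₁ r₂ : ℝ)

lemma coshDist_comm : coshDist Θ r₂ r₁ = coshDist Θ r₁ r₂ := by
  unfold coshDist; ring

lemma sinh_sq_mul_coshDist_sq_sub_one_sub_sq :
    sinh r₁ ^ 2 * (coshDist Θ r₁ r₂ ^ 2 - 1) - (cosh r₁ * coshDist Θ r₁ r₂ - cosh r₂) ^ 2 =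
      (sin Θ * sinh r₁ * sinh r₂) ^ 2 := by
  unfold coshDist
  linear_combination
    (cosh r₂ ^ 2 - (cosh r₁ * cosh r₂ + cos Θ * sinh r₁ * sinh r₂) ^ 2) * cosh_sq r₁
      + sinh r₁ ^ 2 * cosh_sq r₂ - (sinh r₁ * sinh r₂) ^ 2 * sin_sq_add_cos_sq Θ

lemma cosh_mul_coshDist_sub_cosh_add :
    (cosh r₁ * coshDist Θ r₁ r₂ - cosh r₂) * sinh r₂ +
        (cosh r₂ * coshDist Θ r₁ r₂ - cosh r₁) * sinh r₁ =
      (1 + cos Θ) * sinh (r₁ + r₂) * sinh r₁ * sinh r₂ := by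
  rw [sinh_add]
  unfold coshDist
  linear_combination (cosh r₂ * sinh r₂) * cosh_sq r₁ + (cosh r₁ * sinh r₁) * cosh_sq r₂

lemma cosh_mul_coshDist_sub_cosh_mul :
    (cosh r₁ * coshDist Θ r₁ r₂ - cosh r₂) * (cosh r₂ * coshDist Θ r₁ r₂ - cosh r₁) =
      cos Θ * sinh r₁ * sinh r₂ * (coshDist Θ r₁ r₂ ^ 2 - 1) +
        (sin Θ * sinh r₁ * sinh r₂) ^ 2 * coshDist Θ r₁ r₂ := by
  unfold coshDist
  linear_combination (cosh r₁ * cosh r₂ + cos Θ * sinh r₁ * sinh r₂) *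
    ((cosh r₂ ^ 2 - 1) * cosh_sq r₁ + sinh r₁ ^ 2 * cosh_sq r₂
      - (sinh r₁ * sinh r₂) ^ 2 * sin_sq_add_cos_sq Θ)

end Identities

lemma one_lt_coshDist {Θ r₁ r₂ : ℝ} (hΘ : -1 < cos Θ) (h₁ : 0 < r₁) (h₂ : 0 < r₂) :
    1 < coshDist Θ r₁ r₂ := by
  have hsub : 1 ≤ cosh r₁ * cosh r₂ - sinh r₁ * sinh r₂ := cosh_sub r₁ r₂ ▸ one_le_cosh _
  have hpos : 0 < (1 + cos Θ) * sinh r₁ * sinh r₂ := by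
    have := sinh_pos_iff.2 h₁
    have := sinh_pos_iff.2 h₂
    have : 0 < 1 + cos Θ := by linarith
    positivity
  unfold coshDist
  linarith

section Triangle

variable {Θ r₁ r₂ : ℝ}

lemma dist2_eq_arcosh_coshDist : dist2 Θ r₁ r₂ = Real.arcosh (coshDist Θ r₁ r₂) := rfl

lemma dist2_comm : dist2 Θ r₂ r₁ = dist2 Θ r₁ r₂ := by
  rw [dist2_eq_arcosh_coshDist, dist2_eq_arcosh_coshDist, coshDist_comm]

lemma cosh_dist2 (hD : 1 ≤ coshDist Θ r₁ r₂) : cosh (dist2 Θ r₁ r₂) = coshDist Θ r₁ r₂ :=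
  cosh_arcosh hD

lemma sinh_sq_dist2 (hD : 1 ≤ coshDist Θ r₁ r₂) :
    sinh (dist2 Θ r₁ r₂) ^ 2 = coshDist Θ r₁ r₂ ^ 2 - 1 := by
  rw [← cosh_dist2 hD, cosh_sq]
  ring

lemma sinh_dist2_pos (hD : 1 < coshDist Θ r₁ r₂) : 0 < sinh (dist2 Θ r₁ r₂) :=
  sinh_pos_iff.2 (arcosh_pos hD)

lemma theta2₂_eq_theta2₁_swap : theta2₂ Θ r₁ r₂ = theta2₁ Θ r₂ r₁ := by
  rw [theta2₂, theta2₁, dist2_comm]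

lemma one_sub_sq_theta2₁_arg (hD : 1 < coshDist Θ r₁ r₂) (h₁ : 0 < r₁) :
    1 - ((cosh r₁ * cosh (dist2 Θ r₁ r₂) - cosh r₂) / (sinh r₁ * sinh (dist2 Θ r₁ r₂))) ^ 2 =
      (sin Θ * sinh r₂ / sinh (dist2 Θ r₁ r₂)) ^ 2 := by
  have := (sinh_dist2_pos hD).ne'
  have := (sinh_pos_iff.2 h₁).ne'
  rw [cosh_dist2 hD.le]
  field_simp
  rw [sinh_sq_dist2 hD.le]
  linear_combination sinh_sq_mul_coshDist_sq_sub_one_sub_sq Θ r₁ r₂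

lemma cos_theta2₁ (hD : 1 < coshDist Θ r₁ r₂) (h₁ : 0 < r₁) :
    cos (theta2₁ Θ r₁ r₂) =
      (cosh r₁ * coshDist Θ r₁ r₂ - cosh r₂) / (sinh r₁ * sinh (dist2 Θ r₁ r₂)) := by
  have h := one_sub_sq_theta2₁_arg hD h₁
  have habs := abs_le.1 <| (sq_le_one_iff_abs_le_one _).1 <| sub_nonneg.1 <| h ▸ sq_nonneg _
  rw [theta2₁, cos_arccos habs.1 habs.2, cosh_dist2 hD.le]

lemma sin_theta2₁ (hΘ : 0 ≤ sin Θ) (hD : 1 < coshDist Θ r₁ r₂) (h₁ : 0 < r₁) (h₂ : 0 ≤ r₂) :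
    sin (theta2₁ Θ r₁ r₂) = sin Θ * sinh r₂ / sinh (dist2 Θ r₁ r₂) := by
  have := sinh_dist2_pos hD
  have := sinh_nonneg_iff.2 h₂
  rw [theta2₁, sin_arccos, one_sub_sq_theta2₁_arg hD h₁, sqrt_sq (by positivity)]

lemma cos_theta2₂ (hD : 1 < coshDist Θ r₁ r₂) (h₂ : 0 < r₂) :
    cos (theta2₂ Θ r₁ r₂) =
      (cosh r₂ * coshDist Θ r₁ r₂ - cosh r₁) / (sinh r₂ * sinh (dist2 Θ r₁ r₂)) := by
  rw [theta2₂_eq_theta2₁_swap, cos_theta2₁ (coshDist_comm Θ r₁ r₂ ▸ hD) h₂, coshDist_comm,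
    dist2_comm]

lemma sin_theta2₂ (hΘ : 0 ≤ sin Θ) (hD : 1 < coshDist Θ r₁ r₂) (h₁ : 0 ≤ r₁) (h₂ : 0 < r₂) :
    sin (theta2₂ Θ r₁ r₂) = sin Θ * sinh r₁ / sinh (dist2 Θ r₁ r₂) := by
  rw [theta2₂_eq_theta2₁_swap, sin_theta2₁ hΘ (coshDist_comm Θ r₁ r₂ ▸ hD) h₂ h₁, dist2_comm]

lemma cos_theta2₁_add_cos_theta2₂ (hD : 1 < coshDist Θ r₁ r₂) (h₁ : 0 < r₁) (h₂ : 0 < r₂) :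
    cos (theta2₁ Θ r₁ r₂) + cos (theta2₂ Θ r₁ r₂) =
      (1 + cos Θ) * sinh (r₁ + r₂) / sinh (dist2 Θ r₁ r₂) := by
  have := (sinh_dist2_pos hD).ne'
  have := (sinh_pos_iff.2 h₁).ne'
  have := (sinh_pos_iff.2 h₂).ne'
  rw [cos_theta2₁ hD h₁, cos_theta2₂ hD h₂]
  field_simp
  linear_combination cosh_mul_coshDist_sub_cosh_add Θ r₁ r₂

lemma cos_theta2₁_add_theta2₂ (hΘ : Θ ∈ Set.Ioo 0 π) (h₁ : 0 < r₁) (h₂ : 0 < r₂) :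
    cos (theta2₁ Θ r₁ r₂ + theta2₂ Θ r₁ r₂) =
      cos Θ + sin Θ ^ 2 * sinh r₁ * sinh r₂ / (coshDist Θ r₁ r₂ + 1) := by
  have hsin := (sin_pos_of_pos_of_lt_pi hΘ.1 hΘ.2).le
  have hD := one_lt_coshDist (neg_one_lt_cos_of_mem_Ioo hΘ) h₁ h₂
  have := (sinh_dist2_pos hD).ne'
  have := (sinh_pos_iff.2 h₁).ne'
  have := (sinh_pos_iff.2 h₂).ne'
  have : coshDist Θ r₁ r₂ + 1 ≠ 0 := by linarith
  rw [cos_add, cos_theta2₁ hD h₁, cos_theta2₂ hD h₂, sin_theta2₁ hsin hD h₁ h₂.le,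
    sin_theta2₂ hsin hD h₁.le h₂]
  field_simp
  rw [sinh_sq_dist2 hD.le]
  linear_combination (coshDist Θ r₁ r₂ + 1) * cosh_mul_coshDist_sub_cosh_mul Θ r₁ r₂

lemma theta2₁_add_theta2₂ (hΘ : Θ ∈ Set.Ioo 0 π) (h₁ : 0 < r₁) (h₂ : 0 < r₂) :
    theta2₁ Θ r₁ r₂ + theta2₂ Θ r₁ r₂ =
      arccos (cos Θ + sin Θ ^ 2 * sinh r₁ * sinh r₂ / (coshDist Θ r₁ r₂ + 1)) := by
  have hD := one_lt_coshDist (neg_one_lt_cos_of_mem_Ioo hΘ) h₁ h₂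
  have hcos : 0 ≤ cos (theta2₁ Θ r₁ r₂) + cos (theta2₂ Θ r₁ r₂) := by
    rw [cos_theta2₁_add_cos_theta2₂ hD h₁ h₂]
    have := neg_one_lt_cos_of_mem_Ioo hΘ
    exact div_nonneg (mul_nonneg (by linarith) (sinh_nonneg_iff.2 (by linarith)))
      (sinh_dist2_pos hD).le
  have hle : theta2₁ Θ r₁ r₂ + theta2₂ Θ r₁ r₂ ≤ π := add_le_pi_of_cos_add_cos_nonneg
    (arccos_nonneg _) (arccos_le_pi _) (arccos_nonneg _) (arccos_le_pi _) hcos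
  have hnonneg : 0 ≤ theta2₁ Θ r₁ r₂ + theta2₂ Θ r₁ r₂ :=
    add_nonneg (arccos_nonneg _) (arccos_nonneg _)
  rw [← cos_theta2₁_add_theta2₂ hΘ h₁ h₂, arccos_cos hnonneg hle]

end Triangle

open Filter Topology in
theorem two_circle_angle_sum_tendsto_Theta
    (Θ : ℝ) (hΘ : Θ ∈ Set.Ioo 0 Real.pi) :
    Tendsto (fun p : ℝ × ℝ => theta2₁ Θ p.1 p.2 + theta2₂ Θ p.1 p.2)
      (𝓝[{p : ℝ × ℝ | 0 < p.1 ∧ 0 < p.2}] (0, 0)) (𝓝 Θ) := by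
  have hcont : ContinuousAt (fun p : ℝ × ℝ =>
      arccos (cos Θ + sin Θ ^ 2 * sinh p.1 * sinh p.2 / (coshDist Θ p.1 p.2 + 1))) (0, 0) := by
    unfold coshDist
    exact continuous_arccos.continuousAt.comp <| continuousAt_const.add <|
      ContinuousAt.div (by fun_prop) (by fun_prop) (by simp)
  have hlim : Tendsto (fun p : ℝ × ℝ =>
      arccos (cos Θ + sin Θ ^ 2 * sinh p.1 * sinh p.2 / (coshDist Θ p.1 p.2 + 1))) (𝓝 (0, 0))
      (𝓝 Θ) := by
    simpa [arccos_cos hΘ.1.le hΘ.2.le] using hcont.tendsto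
  exact (hlim.mono_left nhdsWithin_le_nhds).congr' <|
    eventually_nhdsWithin_of_forall fun p hp => (theta2₁_add_theta2₂ hΘ hp.1 hp.2).symm
end
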